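/- arXiv:1111.0053 — 4 statements merged into one kernel-verified Lean document; each statement's English description precedes it below -/
import Mathlib

section
/- If S is an induced subgraph of G and P is a valid concrete plan in S from arrangement a to arrangement b, then P is also a valid concrete plan in G from any arrangement extending a to the corresponding arrangement extending b (with robots outside S fixed). -/
open scoped Classical

/-- An arrangement of robots `R` on vertices `V`: an injective partial map `V ⇀ R`. -/
abbrev Arrangement (V R : Type) := V → Option R

/-- Injectivity of an arrangement: no robot occupies two vertices. -/
def ArrInj {V R : Type} (a : Arrangement V R) : Prop :=
  ∀ u v r, a u = some r → a v = some r → u = v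

/-- A plan-step `(r, u, v)` is applicable if `r` is at `u`, `v` is unoccupied,
and `(u,v)` is an edge. -/
def Applicable {V R : Type} (G : SimpleGraph V) (a : Arrangement V R)
    (s : R × V × V) : Prop :=
  G.Adj s.2.1 s.2.2 ∧ a s.2.1 = some s.1 ∧ a s.2.2 = none

/-- Applying a plan-step: move the robot from `u` to `v`. -/
noncomputable def applyStep {V R : Type} (a : Arrangement V R) (s : R × V × V) :
    Arrangement V R :=
  fun w => if w = s.2.2 then some s.1 else if w = s.2.1 then none else a w

/-- `IsPlan G P a b`: the sequence of plan-steps `P` is a valid concrete plan in `G`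
transforming arrangement `a` into arrangement `b`. -/
def IsPlan {V R : Type} (G : SimpleGraph V) :
    List (R × V × V) → Arrangement V R → Arrangement V R → Prop
  | [], a, b => a = b
  | s :: P, a, b => Applicable G a s ∧ IsPlan G P (applyStep a s) b

/-!
A plan-step only reads and writes the arrangement at its two endpoints. So if every step of `P`
stays inside `S`, then running `P` from `a'` tracks the run from `a` on `S` and leaves every
vertex outside `S` untouched.
-/

section

variable {V R : Type} {S : Set V} {a a' : Arrangement V R} {s : R × V × V}

theorem applyStep_apply_of_ne (a : Arrangement V R) {w : V} (h₁ : w ≠ s.2.1) (h₂ : w ≠ s.2.2) :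
    applyStep a s w = a w := by
  simp only [applyStep, if_neg h₁, if_neg h₂]

theorem applyStep_eqOn_compl (h₁ : s.2.1 ∈ S) (h₂ : s.2.2 ∈ S) :
    Set.EqOn (applyStep a s) a Sᶜ := fun _ hw =>
  applyStep_apply_of_ne a (fun h => hw (h ▸ h₁)) (fun h => hw (h ▸ h₂))

theorem Set.EqOn.applyStep (h : Set.EqOn a a' S) (s : R × V × V) :
    Set.EqOn (_root_.applyStep a s) (_root_.applyStep a' s) S := fun _ hw => by
  simp only [_root_.applyStep, h hw]

theorem Applicable.of_eqOn {G : SimpleGraph V} (happ : Applicable G a s) (h : Set.EqOn a' a S)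
    (h₁ : s.2.1 ∈ S) (h₂ : s.2.2 ∈ S) : Applicable G a' s :=
  ⟨happ.1, (h h₁).trans happ.2.1, (h h₂).trans happ.2.2⟩

end

theorem plan_in_subgraph_extends_general {V R : Type} (G : SimpleGraph V) (S : Set V)
    (P : List (R × V × V)) (a b a' b' : Arrangement V R)
    (hsteps : ∀ s ∈ P, s.2.1 ∈ S ∧ s.2.2 ∈ S)
    (hplan : IsPlan G P a b)
    (ha' : ∀ v ∈ S, a' v = a v)
    (hb'in : ∀ v ∈ S, b' v = b v)
    (hb'out : ∀ v ∉ S, b' v = a' v) :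
    IsPlan G P a' b' := by
  induction P generalizing a a' with
  | nil =>
    funext v
    by_cases hv : v ∈ S
    · rw [ha' v hv, hb'in v hv, hplan]
    · exact (hb'out v hv).symm
  | cons s P ih =>
    obtain ⟨happ, hrest⟩ := hplan
    obtain ⟨h₁, h₂⟩ := hsteps s List.mem_cons_self
    refine ⟨happ.of_eqOn ha' h₁ h₂, ih _ _ (fun t ht => hsteps t (List.mem_cons_of_mem _ ht))
      hrest (Set.EqOn.applyStep ha' s) fun v hv => ?_⟩
    rw [hb'out v hv, applyStep_eqOn_compl h₁ h₂ hv]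

/-- If `S` is (the vertex set of) an induced subgraph of `G` and `P` is a valid
concrete plan within `S` from arrangement `a` to arrangement `b` (all steps between
vertices of `S`, with `a`, `b` supported on `S`), then `P` is also a valid concrete
plan in `G` from any arrangement `a'` extending `a` to the corresponding
arrangement `b'` extending `b` (robots outside `S` fixed). -/
theorem plan_in_subgraph_extends {V R : Type} (G : SimpleGraph V) (S : Set V)
    (P : List (R × V × V)) (a b a' b' : Arrangement V R)
    (hsteps : ∀ s ∈ P, s.2.1 ∈ S ∧ s.2.2 ∈ S)
    (ha : ∀ v ∉ S, a v = none) (hbsupp : ∀ v ∉ S, b v = none)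
    (hplan : IsPlan G P a b)
    (ha' : ∀ v ∈ S, a' v = a v)
    (hb'in : ∀ v ∈ S, b' v = b v)
    (hb'out : ∀ v ∉ S, b' v = a' v) :
    IsPlan G P a' b' :=
  plan_in_subgraph_extends_general G S P a b a' b' hsteps hplan ha' hb'in hb'out
end

section
/- If S_1 and S_2 are disjoint induced subgraphs of G, P_1 is a plan on S_1 from a_1 to b_1, P_2 is a plan on S_2 from a_2 to b_2, and a_1, a_2 use disjoint sets of robots, then every interleaving of P_1 and P_2 is a valid plan on G from a_1 ⊗ a_2 to b_1 ⊗ b_2. -/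
/-! Moves of the two plans touch disjoint vertex sets, so each step of the interleaving changes
only its own component of `a₁ ⊗ a₂` and sees there exactly the occupancy that its own plan
sees: applying a step of `P₁` to `a₁ ⊗ a₂` gives `(step a₁) ⊗ a₂`, and symmetrically for `P₂`. -/

open scoped Classical

/-- `Interleaving P Q L`: `L` contains `P` and `Q` as complementary subsequences
preserving their orders. -/
inductive Interleaving {α : Type} : List α → List α → List α → Prop
  | nil : Interleaving [] [] []
  | left {P Q L : List α} (s : α) : Interleaving P Q L → Interleaving (s :: P) Q (s :: L)
  | right {P Q L : List α} (s : α) : Interleaving P Q L → Interleaving P (s :: Q) (s :: L)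

/-- The combined arrangement `a₁ ⊗ a₂` of two arrangements supported on disjoint
vertex sets. -/
def combineArr {V R : Type} (a₁ a₂ : Arrangement V R) : Arrangement V R :=
  fun v => (a₁ v).orElse (fun _ => a₂ v)

section Interleaving

variable {V R : Type} {G : SimpleGraph V}

def SupportedOn (a : Arrangement V R) (S : Set V) : Prop :=
  ∀ v ∉ S, a v = none

theorem SupportedOn.applyStep {a : Arrangement V R} {S : Set V} {s : R × V × V}
    (ha : SupportedOn a S) (hs : s.2.2 ∈ S) : SupportedOn (applyStep a s) S := by
  intro v hv
  have hv₂ : v ≠ s.2.2 := fun h => hv (h ▸ hs)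
  simp only [_root_.applyStep, if_neg hv₂]
  split_ifs
  exacts [rfl, ha v hv]

theorem combineArr_apply_of_right_eq_none {a₁ a₂ : Arrangement V R} {v : V} (h : a₂ v = none) :
    combineArr a₁ a₂ v = a₁ v := by
  cases h₁ : a₁ v <;> simp [combineArr, h, h₁]

theorem combineArr_apply_of_left_eq_none {a₁ a₂ : Arrangement V R} {v : V} (h : a₁ v = none) :
    combineArr a₁ a₂ v = a₂ v := by
  simp [combineArr, h]

theorem applyStep_combineArr_left {a₁ a₂ : Arrangement V R} {s : R × V × V}
    (hu : a₂ s.2.1 = none) (hv : a₂ s.2.2 = none) :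
    applyStep (combineArr a₁ a₂) s = combineArr (applyStep a₁ s) a₂ := by
  funext w
  simp only [applyStep, combineArr]
  split_ifs <;> simp_all

theorem applyStep_combineArr_right {a₁ a₂ : Arrangement V R} {s : R × V × V}
    (hu : a₁ s.2.1 = none) (hv : a₁ s.2.2 = none) :
    applyStep (combineArr a₁ a₂) s = combineArr a₁ (applyStep a₂ s) := by
  funext w
  simp only [applyStep, combineArr]
  split_ifs <;> simp_all

theorem Applicable.combineArr_left {a₁ a₂ : Arrangement V R} {s : R × V × V}
    (h : Applicable G a₁ s) (hu : a₂ s.2.1 = none) (hv : a₂ s.2.2 = none) :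
    Applicable G (combineArr a₁ a₂) s :=
  ⟨h.1, (combineArr_apply_of_right_eq_none hu).trans h.2.1,
    (combineArr_apply_of_right_eq_none hv).trans h.2.2⟩

theorem Applicable.combineArr_right {a₁ a₂ : Arrangement V R} {s : R × V × V}
    (h : Applicable G a₂ s) (hu : a₁ s.2.1 = none) (hv : a₁ s.2.2 = none) :
    Applicable G (combineArr a₁ a₂) s :=
  ⟨h.1, (combineArr_apply_of_left_eq_none hu).trans h.2.1,
    (combineArr_apply_of_left_eq_none hv).trans h.2.2⟩

theorem Interleaving.isPlan_combineArr {S₁ S₂ : Set V} (hS : Disjoint S₁ S₂)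
    {P₁ P₂ L : List (R × V × V)} (hL : Interleaving P₁ P₂ L) {a₁ b₁ a₂ b₂ : Arrangement V R}
    (hsteps₁ : ∀ s ∈ P₁, s.2.1 ∈ S₁ ∧ s.2.2 ∈ S₁) (hsteps₂ : ∀ s ∈ P₂, s.2.1 ∈ S₂ ∧ s.2.2 ∈ S₂)
    (ha₁ : SupportedOn a₁ S₁) (ha₂ : SupportedOn a₂ S₂)
    (hplan₁ : IsPlan G P₁ a₁ b₁) (hplan₂ : IsPlan G P₂ a₂ b₂) :
    IsPlan G L (combineArr a₁ a₂) (combineArr b₁ b₂) := by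
  induction hL generalizing a₁ a₂ with
  | nil => rw [show a₁ = b₁ from hplan₁, show a₂ = b₂ from hplan₂]; rfl
  | left s _ ih =>
    obtain ⟨happ, hrest⟩ := hplan₁
    obtain ⟨hu, hv⟩ := hsteps₁ s List.mem_cons_self
    have hu₂ := ha₂ _ (hS.notMem_of_mem_left hu)
    have hv₂ := ha₂ _ (hS.notMem_of_mem_left hv)
    refine ⟨happ.combineArr_left hu₂ hv₂, ?_⟩
    rw [applyStep_combineArr_left hu₂ hv₂]
    exact ih (fun t ht => hsteps₁ t (List.mem_cons_of_mem _ ht)) hsteps₂ (ha₁.applyStep hv)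
      ha₂ hrest hplan₂
  | right s _ ih =>
    obtain ⟨happ, hrest⟩ := hplan₂
    obtain ⟨hu, hv⟩ := hsteps₂ s List.mem_cons_self
    have hu₁ := ha₁ _ (hS.notMem_of_mem_right hu)
    have hv₁ := ha₁ _ (hS.notMem_of_mem_right hv)
    refine ⟨happ.combineArr_right hu₁ hv₁, ?_⟩
    rw [applyStep_combineArr_right hu₁ hv₁]
    exact ih hsteps₁ (fun t ht => hsteps₂ t (List.mem_cons_of_mem _ ht)) ha₁
      (ha₂.applyStep hv) hplan₁ hrest

end Interleaving

theorem interleaving_plan_general {V R : Type} (G : SimpleGraph V) (S₁ S₂ : Set V)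
    (hS : Disjoint S₁ S₂)
    (P₁ P₂ L : List (R × V × V)) (a₁ b₁ a₂ b₂ : Arrangement V R)
    (hsteps₁ : ∀ s ∈ P₁, s.2.1 ∈ S₁ ∧ s.2.2 ∈ S₁)
    (hsteps₂ : ∀ s ∈ P₂, s.2.1 ∈ S₂ ∧ s.2.2 ∈ S₂)
    (ha₁ : ∀ v ∉ S₁, a₁ v = none)
    (ha₂ : ∀ v ∉ S₂, a₂ v = none)
    (hplan₁ : IsPlan G P₁ a₁ b₁) (hplan₂ : IsPlan G P₂ a₂ b₂)
    (hL : Interleaving P₁ P₂ L) :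
    IsPlan G L (combineArr a₁ a₂) (combineArr b₁ b₂) :=
  hL.isPlan_combineArr hS hsteps₁ hsteps₂ ha₁ ha₂ hplan₁ hplan₂

/-- If `S₁` and `S₂` are disjoint induced subgraphs of `G`, `P₁` is a plan on `S₁`
from `a₁` to `b₁`, `P₂` is a plan on `S₂` from `a₂` to `b₂`, and `a₁`, `a₂` use
disjoint sets of robots, then every interleaving of `P₁` and `P₂` is a valid plan
on `G` from `a₁ ⊗ a₂` to `b₁ ⊗ b₂`. -/
theorem interleaving_plan {V R : Type} (G : SimpleGraph V) (S₁ S₂ : Set V)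
    (hS : Disjoint S₁ S₂)
    (P₁ P₂ L : List (R × V × V)) (a₁ b₁ a₂ b₂ : Arrangement V R)
    (hsteps₁ : ∀ s ∈ P₁, s.2.1 ∈ S₁ ∧ s.2.2 ∈ S₁)
    (hsteps₂ : ∀ s ∈ P₂, s.2.1 ∈ S₂ ∧ s.2.2 ∈ S₂)
    (ha₁ : ∀ v ∉ S₁, a₁ v = none) (hb₁ : ∀ v ∉ S₁, b₁ v = none)
    (ha₂ : ∀ v ∉ S₂, a₂ v = none) (hb₂ : ∀ v ∉ S₂, b₂ v = none)
    (hrobots : ∀ r : R, ¬ ((∃ v, a₁ v = some r) ∧ ∃ w, a₂ w = some r))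
    (hplan₁ : IsPlan G P₁ a₁ b₁) (hplan₂ : IsPlan G P₂ a₂ b₂)
    (hL : Interleaving P₁ P₂ L) :
    IsPlan G L (combineArr a₁ a₂) (combineArr b₁ b₂) :=
  interleaving_plan_general G S₁ S₂ hS P₁ P₂ L a₁ b₁ a₂ b₂ hsteps₁ hsteps₂ ha₁ ha₂ hplan₁ hplan₂ hL
end

section
/- For any configuration c of a graph G, robot r, and vertex v, the set c ⊖ (r,v) = { [a ⊖ r] : a ∈ c, a(v) = r } contains at most one element. -/
open scoped Classical

/-- Mutual reachability by plans confined to the vertex set `S` (an induced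
subgraph of `G`). -/
def SimIn {V R : Type} (G : SimpleGraph V) (S : Set V) (a b : Arrangement V R) : Prop :=
  (∃ P : List (R × V × V), (∀ s ∈ P, s.2.1 ∈ S ∧ s.2.2 ∈ S) ∧ IsPlan G P a b) ∧
  (∃ Q : List (R × V × V), (∀ s ∈ Q, s.2.1 ∈ S ∧ s.2.2 ∈ S) ∧ IsPlan G Q b a)

/-- The configuration (equivalence class) of the arrangement `a` within the
subgraph `S` of `G`. -/
def clsIn {V R : Type} (G : SimpleGraph V) (S : Set V) (a : Arrangement V R) :
    Set (Arrangement V R) :=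
  {b | SimIn G S a b}

/-- The arrangement `a ⊖ r`: remove robot `r`. -/
noncomputable def removeR {V R : Type} (a : Arrangement V R) (r : R) : Arrangement V R :=
  fun w => if a w = some r then none else a w

/-- The arrangement `a ⊕ (r, v)`: add robot `r` at vertex `v`. -/
noncomputable def addR {V R : Type} (a : Arrangement V R) (r : R) (v : V) :
    Arrangement V R :=
  fun w => if w = v then some r else a w

/-- `c ⊖ (r, u)`: the set of configurations obtained from configuration `c` by
removing robot `r` exiting via vertex `u`. -/
def ominusC {V R : Type} (G : SimpleGraph V) (S : Set V)
    (c : Set (Arrangement V R)) (r : R) (u : V) : Set (Set (Arrangement V R)) :=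
  {C | ∃ a ∈ c, a u = some r ∧ C = clsIn G S (removeR a r)}

/-- `c ⊕ (r, v)`: the set of configurations obtained from configuration `c` by
adding robot `r` entering at vertex `v`. -/
def oplusC {V R : Type} (G : SimpleGraph V) (S : Set V)
    (c : Set (Arrangement V R)) (r : R) (v : V) : Set (Set (Arrangement V R)) :=
  {C | ∃ a ∈ c, a v = none ∧ C = clsIn G S (addR a r v)}

/-- The restriction `a / S` of an arrangement to a vertex set. -/
noncomputable def restrictArr {V R : Type} (a : Arrangement V R) (S : Set V) :
    Arrangement V R :=
  fun v => if v ∈ S then a v else none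

/-
Deleting robot `r` from every arrangement commutes with plan execution: the moves of `r` act
trivially on `a ⊖ r`, and every other move stays applicable after `r` is gone. So dropping the
moves of `r` from mutual plans between `a, a' ∈ c` gives mutual plans between `a ⊖ r` and
`a' ⊖ r`, and all elements of `c ⊖ (r, v)` are the same class.
-/

variable {V R : Type} {G : SimpleGraph V}

theorem IsPlan.append {P Q : List (R × V × V)} {a b d : Arrangement V R}
    (hP : IsPlan G P a b) (hQ : IsPlan G Q b d) : IsPlan G (P ++ Q) a d := by
  induction P generalizing a with
  | nil => cases hP; exact hQ
  | cons s P ih => exact ⟨hP.1, ih hP.2⟩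

theorem removeR_applyStep_of_eq {a : Arrangement V R} {s : R × V × V}
    (hfrom : a s.2.1 = some s.1) (hto : a s.2.2 = none) :
    removeR (applyStep a s) s.1 = removeR a s.1 := by
  funext w
  by_cases h₂ : w = s.2.2
  · subst h₂; simp [removeR, applyStep, hto]
  by_cases h₁ : w = s.2.1
  · subst h₁; simp [removeR, applyStep, hfrom, h₂]
  · simp [removeR, applyStep, h₁, h₂]

theorem removeR_applyStep_of_ne {a : Arrangement V R} {s : R × V × V} {r : R}
    (hr : s.1 ≠ r) : removeR (applyStep a s) r = applyStep (removeR a r) s := by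
  funext w
  by_cases h₂ : w = s.2.2
  · simp [removeR, applyStep, h₂, hr]
  by_cases h₁ : w = s.2.1
  · subst h₁; simp [removeR, applyStep, h₂]
  · simp [removeR, applyStep, h₁, h₂]

theorem Applicable.removeR {a : Arrangement V R} {s : R × V × V} {r : R}
    (hs : Applicable G a s) (hr : s.1 ≠ r) : Applicable G (removeR a r) s := by
  obtain ⟨hadj, hfrom, hto⟩ := hs
  exact ⟨hadj, by simp [_root_.removeR, hfrom, hr], by simp [_root_.removeR, hto]⟩

theorem IsPlan.removeR {P : List (R × V × V)} {a b : Arrangement V R} (r : R)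
    (hP : IsPlan G P a b) :
    IsPlan G (P.filter (·.1 ≠ r)) (removeR a r) (removeR b r) := by
  induction P generalizing a with
  | nil => cases hP; rfl
  | cons s P ih =>
    obtain ⟨hs, hrest⟩ := hP
    by_cases hr : s.1 = r
    · subst hr
      simpa [List.filter_cons, removeR_applyStep_of_eq hs.2.1 hs.2.2] using ih hrest
    · rw [List.filter_cons, if_pos (by simpa using hr)]
      exact ⟨hs.removeR hr, removeR_applyStep_of_ne hr ▸ ih hrest⟩

namespace SimIn

variable {S : Set V} {a b d : Arrangement V R}

theorem symm (h : SimIn G S a b) : SimIn G S b a :=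
  ⟨h.2, h.1⟩

theorem trans (h₁ : SimIn G S a b) (h₂ : SimIn G S b d) : SimIn G S a d := by
  obtain ⟨⟨P₁, hP₁S, hP₁⟩, ⟨Q₁, hQ₁S, hQ₁⟩⟩ := h₁
  obtain ⟨⟨P₂, hP₂S, hP₂⟩, ⟨Q₂, hQ₂S, hQ₂⟩⟩ := h₂
  refine ⟨⟨P₁ ++ P₂, ?_, hP₁.append hP₂⟩, ⟨Q₂ ++ Q₁, ?_, hQ₂.append hQ₁⟩⟩
  · simpa only [List.forall_mem_append] using ⟨hP₁S, hP₂S⟩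
  · simpa only [List.forall_mem_append] using ⟨hQ₂S, hQ₁S⟩

theorem removeR (r : R) (h : SimIn G S a b) :
    SimIn G S (removeR a r) (removeR b r) := by
  obtain ⟨⟨P, hPS, hP⟩, ⟨Q, hQS, hQ⟩⟩ := h
  exact ⟨⟨_, fun s hs => hPS s (List.mem_of_mem_filter hs), hP.removeR r⟩,
    ⟨_, fun s hs => hQS s (List.mem_of_mem_filter hs), hQ.removeR r⟩⟩

theorem clsIn_eq (h : SimIn G S a b) : clsIn G S a = clsIn G S b := by
  ext x
  exact ⟨h.symm.trans, h.trans⟩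

end SimIn

/-- For any configuration `c` of a graph `G` (an equivalence class of arrangements
under mutual reachability), robot `r` and vertex `v`, the set
`c ⊖ (r,v) = { [a ⊖ r] : a ∈ c, a v = r }` contains at most one element. -/
theorem ominus_subsingleton {V R : Type} (G : SimpleGraph V)
    (c : Set (Arrangement V R)) (r : R) (v : V)
    (hc : ∃ a₀ : Arrangement V R, c = clsIn G Set.univ a₀) :
    (ominusC G Set.univ c r v).Subsingleton := by
  obtain ⟨a₀, rfl⟩ := hc
  rintro _ ⟨a₁, ha₁, -, rfl⟩ _ ⟨a₂, ha₂, -, rfl⟩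
  exact ((SimIn.symm ha₁).trans ha₂ |>.removeR r).clsIn_eq
end

section
/- In a cycle graph (ring) on n vertices occupied by k < n robots, two arrangements of the same robot set are mutually reachable iff their cyclic orderings of robots around the ring agree up to rotation; in particular the cyclic order cannot be reversed or permuted otherwise. -/
open scoped Classical

/-- The cyclic reading of an arrangement on the cycle graph: the sequence of robots
read around the ring in increasing vertex index. -/
def ordering {R : Type} {n : ℕ} (a : Arrangement (Fin n) R) : List R :=
  (List.finRange n).filterMap a

/-!
A move composes the arrangement with the transposition of an occupied vertex and an adjacent
empty one. Across an edge `{i, i + 1}` this leaves the reading around the ring unchanged; across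
the edge `{n - 1, 0}` it carries one robot from one end of the reading to the other, i.e. it
rotates the reading. Conversely, moving robots down (which decreases the sum of the occupied
indices) packs any arrangement onto the vertices `0, …, k - 1` without changing its reading, and
from the packed arrangement of `r :: M`, moving `r` across `{0, n - 1}` (vertex `n - 1` is free
because `k < n`) and repacking gives the packed arrangement of `M ++ [r]`. As moves are
reversible, two arrangements with rotated readings reach each other through packed ones.
-/

open Relation

section Moves

variable {V R : Type} {G : SimpleGraph V}

def Move (G : SimpleGraph V) (a b : Arrangement V R) : Prop :=
  ∃ s, Applicable G a s ∧ applyStep a s = b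

theorem exists_isPlan_iff_reflTransGen {a b : Arrangement V R} :
    (∃ P, IsPlan G P a b) ↔ ReflTransGen (Move G) a b := by
  constructor
  · rintro ⟨P, hP⟩
    induction P generalizing a with
    | nil => exact hP ▸ ReflTransGen.refl
    | cons s P ih => exact ReflTransGen.head ⟨s, hP.1, rfl⟩ (ih hP.2)
  · intro h
    induction h using ReflTransGen.head_induction_on with
    | refl => exact ⟨[], rfl⟩
    | head hmove _ ih =>
      obtain ⟨s, hs, rfl⟩ := hmove
      obtain ⟨P, hP⟩ := ih
      exact ⟨s :: P, hs, hP⟩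

theorem applyStep_eq_comp_swap [DecidableEq V] {a : Arrangement V R} {r : R} {u v : V}
    (hu : a u = some r) (hv : a v = none) :
    applyStep a (r, u, v) = a ∘ Equiv.swap u v := by
  funext w
  by_cases hwv : w = v
  · subst hwv; simp [applyStep, hu]
  · by_cases hwu : w = u
    · subst hwu; simp [applyStep, hv, hwv]
    · simp [applyStep, hwu, hwv, Equiv.swap_apply_of_ne_of_ne]

theorem Move.symm {a b : Arrangement V R} (h : Move G a b) : Move G b a := by
  obtain ⟨⟨r, u, v⟩, ⟨hadj, hu, hv⟩, rfl⟩ := h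
  dsimp only at hadj hu hv
  rw [applyStep_eq_comp_swap hu hv]
  refine ⟨(r, v, u), ⟨hadj.symm, by simpa using hu, by simpa using hv⟩, ?_⟩
  rw [applyStep_eq_comp_swap (by simpa using hu) (by simpa using hv), Function.comp_assoc,
    Equiv.swap_comm, ← Equiv.coe_trans, Equiv.swap_swap, Equiv.coe_refl, Function.comp_id]

theorem reflTransGen_move_symm {a b : Arrangement V R} (h : ReflTransGen (Move G) a b) :
    ReflTransGen (Move G) b a :=
  ReflTransGen.mono (fun _ _ => Move.symm) _ _ (ReflTransGen.swap _ _ h)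

end Moves

section Ordering

variable {R : Type} {n : ℕ}

theorem ordering_succ (a : Arrangement (Fin (n + 1)) R) :
    ordering a = (a 0).toList ++ ordering (fun i => a i.succ) := by
  rcases h : a 0 with _ | r <;> simp [ordering, List.finRange_succ, List.filterMap_map, h]

theorem ordering_castSucc (a : Arrangement (Fin (n + 1)) R) :
    ordering a = ordering (fun i => a i.castSucc) ++ (a (Fin.last n)).toList := by
  rcases h : a (Fin.last n) with _ | r <;>
    simp [ordering, List.finRange_succ_last, List.filterMap_map, h]

theorem ordering_comp_swap_castSucc_succ (a : Arrangement (Fin (n + 1)) R) (i : Fin n)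
    (h : a i.castSucc = none ∨ a i.succ = none) :
    ordering (a ∘ Equiv.swap i.castSucc i.succ) = ordering a := by
  induction n with
  | zero => exact i.elim0
  | succ n ih =>
    induction i using Fin.cases with
    | zero =>
      rw [ordering_succ, ordering_succ a, ordering_succ (fun i => a i.succ),
        ordering_succ (fun i => (a ∘ _) i.succ)]
      have hfix (k : Fin n) : Equiv.swap (0 : Fin (n + 2)) 1 k.succ.succ = k.succ.succ :=
        Equiv.swap_apply_of_ne_of_ne (Fin.succ_ne_zero _) (Fin.succ_succ_ne_one _)
      rcases h with h | h <;> simp_all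
    | succ j =>
      rw [ordering_succ, ordering_succ a]
      have hs := (Fin.succ_injective (n + 1)).swap_apply j.castSucc j.succ
      simp only [Function.comp_apply, ← Fin.succ_castSucc, hs] at h ⊢
      rw [Equiv.swap_apply_of_ne_of_ne (Fin.succ_ne_zero _).symm (Fin.succ_ne_zero _).symm]
      exact congrArg _ (ih (fun i => a i.succ) j h)

theorem ordering_eq_first_middle_last (a : Arrangement (Fin (n + 2)) R) :
    ordering a = (a 0).toList ++ ordering (fun i : Fin n => a i.castSucc.succ) ++
      (a (Fin.last _)).toList := by
  rw [ordering_succ, ordering_castSucc (fun i => a i.succ), List.append_assoc]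
  rfl

theorem ordering_comp_swap_zero_last (a : Arrangement (Fin (n + 2)) R) :
    ordering (a ∘ Equiv.swap 0 (Fin.last _)) = (a (Fin.last _)).toList ++
      ordering (fun i : Fin n => a i.castSucc.succ) ++ (a 0).toList := by
  have hmid : (fun i : Fin n => (a ∘ Equiv.swap 0 (Fin.last _)) i.castSucc.succ) =
      fun i => a i.castSucc.succ := by
    funext i
    rw [Function.comp_apply, Equiv.swap_apply_of_ne_of_ne (Fin.succ_ne_zero _)]
    exact Fin.succ_castSucc i ▸ Fin.castSucc_ne_last _
  rw [ordering_eq_first_middle_last, hmid]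
  simp

end Ordering

theorem Fin.sub_eq_one_cases {n : ℕ} {x y : Fin (n + 2)} (h : y - x = 1) :
    (∃ i : Fin (n + 1), x = i.castSucc ∧ y = i.succ) ∨ (x = Fin.last _ ∧ y = 0) := by
  rw [sub_eq_iff_eq_add'] at h
  by_cases hx : x = Fin.last _
  · subst hx
    exact Or.inr ⟨rfl, h.trans (Fin.last_add_one _)⟩
  · refine Or.inl ⟨x.castPred hx, (Fin.castSucc_castPred x hx).symm, ?_⟩
    rw [h, ← Fin.coeSucc_eq_succ, Fin.castSucc_castPred]

namespace SimpleGraph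

theorem cycleGraph_adj_castSucc_succ {n : ℕ} (i : Fin n) :
    (cycleGraph (n + 1)).Adj i.castSucc i.succ := by
  cases n with
  | zero => exact i.elim0
  | succ n =>
    exact Or.inr (by rw [← Fin.coeSucc_eq_succ, add_sub_cancel_left])

theorem cycleGraph_adj_zero_last {n : ℕ} : (cycleGraph (n + 2)).Adj 0 (Fin.last _) := by
  rw [SimpleGraph.cycleGraph_adj]
  simp

theorem cycleGraph_adj_cases {n : ℕ} {u v : Fin (n + 2)} (h : (cycleGraph (n + 2)).Adj u v) :
    (∃ i : Fin (n + 1), (u = i.castSucc ∧ v = i.succ) ∨ (u = i.succ ∧ v = i.castSucc)) ∨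
      (u = 0 ∧ v = Fin.last _) ∨ (u = Fin.last _ ∧ v = 0) := by
  rw [SimpleGraph.cycleGraph_adj] at h
  rcases h with h | h
  · rcases Fin.sub_eq_one_cases h with ⟨i, hv, hu⟩ | ⟨hv, hu⟩
    · exact Or.inl ⟨i, Or.inr ⟨hu, hv⟩⟩
    · exact Or.inr (Or.inl ⟨hu, hv⟩)
  · rcases Fin.sub_eq_one_cases h with ⟨i, hu, hv⟩ | ⟨hu, hv⟩
    · exact Or.inl ⟨i, Or.inl ⟨hu, hv⟩⟩
    · exact Or.inr (Or.inr ⟨hu, hv⟩)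

end SimpleGraph

section Ring

variable {R : Type} {n : ℕ}

theorem Move.ordering_isRotated {a b : Arrangement (Fin n) R}
    (h : Move (SimpleGraph.cycleGraph n) a b) : ordering a ~r ordering b := by
  obtain ⟨⟨r, u, v⟩, ⟨hadj, hu, hv⟩, rfl⟩ := h
  dsimp only at hadj hu hv
  obtain ⟨m, rfl⟩ : ∃ m, n = m + 2 := ⟨n - 2, by have := Fin.val_ne_of_ne hadj.ne; omega⟩
  rw [applyStep_eq_comp_swap hu hv]
  rcases SimpleGraph.cycleGraph_adj_cases hadj with ⟨i, ⟨rfl, rfl⟩ | ⟨rfl, rfl⟩⟩ | ⟨rfl, rfl⟩ | ⟨rfl, rfl⟩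
  · rw [ordering_comp_swap_castSucc_succ a i (Or.inr hv)]
  · rw [Equiv.swap_comm, ordering_comp_swap_castSucc_succ a i (Or.inl hv)]
  · rw [ordering_comp_swap_zero_last, ordering_eq_first_middle_last a, hv]
    simpa using List.isRotated_append
  · rw [Equiv.swap_comm, ordering_comp_swap_zero_last, ordering_eq_first_middle_last a, hv]
    simpa using List.isRotated_append

theorem ordering_isRotated_of_reflTransGen {a b : Arrangement (Fin n) R}
    (h : ReflTransGen (Move (SimpleGraph.cycleGraph n)) a b) : ordering a ~r ordering b := by
  induction h with
  | refl => rfl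
  | tail _ hmove ih => exact ih.trans hmove.ordering_isRotated

def packed (L : List R) : Arrangement (Fin n) R := fun v => L[v.val]?

theorem ordering_packed (L : List R) (hL : L.length ≤ n) :
    ordering (packed L : Arrangement (Fin n) R) = L := by
  induction L generalizing n with
  | nil => simp [ordering, packed]
  | cons r L ih =>
    obtain ⟨m, rfl⟩ : ∃ m, n = m + 1 := ⟨n - 1, by simp at hL; omega⟩
    rw [ordering_succ]
    exact congrArg (r :: ·) (ih (by simpa using hL))

theorem eq_packed_ordering {a : Arrangement (Fin (n + 1)) R}
    (h : ∀ i : Fin n, a i.castSucc = none → a i.succ = none) : a = packed (ordering a) := by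
  induction n with
  | zero =>
    funext i
    induction i using Fin.cases with
    | zero => rw [ordering_succ]; cases a 0 <;> rfl
    | succ i => exact i.elim0
  | succ n ih =>
    have htail := ih (a := fun i => a i.succ) fun i hi => h i.succ (Fin.succ_castSucc i ▸ hi)
    rw [ordering_succ]
    rcases h0 : a 0 with _ | r
    · have hnil : ordering (fun i => a i.succ) = [] := by
        have h1 := congrFun htail 0
        simp only [h 0 h0, packed] at h1
        simpa using h1.symm
      rw [hnil] at htail ⊢
      funext i
      induction i using Fin.cases with
      | zero => exact h0
      | succ i => exact congrFun htail i
    · funext i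
      induction i using Fin.cases with
      | zero => exact h0
      | succ i => exact congrFun htail i

def occupiedIndexSum (a : Arrangement (Fin n) R) : ℕ :=
  ∑ v, if a v = none then 0 else v.val

theorem occupiedIndexSum_comp_swap_lt {a : Arrangement (Fin n) R} {u v : Fin n} (hvu : v < u)
    (hu : a u ≠ none) (hv : a v = none) :
    occupiedIndexSum (a ∘ Equiv.swap u v) < occupiedIndexSum a := by
  unfold occupiedIndexSum
  rw [← Equiv.sum_comp (Equiv.swap u v)]
  simp only [Function.comp_apply, Equiv.swap_apply_self]
  refine Finset.sum_lt_sum (fun w _ => ?_) ⟨u, Finset.mem_univ _, by simpa [hu] using hvu⟩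
  by_cases hw : a w = none
  · simp [hw]
  · have hwv : w ≠ v := fun h => hw (h ▸ hv)
    by_cases hwu : w = u
    · subst hwu; simpa [hw] using hvu.le
    · simp [hw, Equiv.swap_apply_of_ne_of_ne hwu hwv]

theorem reflTransGen_packed_ordering (a : Arrangement (Fin (n + 1)) R) :
    ReflTransGen (Move (SimpleGraph.cycleGraph (n + 1))) a (packed (ordering a)) := by
  induction h : occupiedIndexSum a using Nat.strong_induction_on generalizing a with
  | _ N ih =>
    by_cases hpacked : ∀ i : Fin n, a i.castSucc = none → a i.succ = none
    · rw [← eq_packed_ordering hpacked]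
    simp only [not_forall] at hpacked
    obtain ⟨i, hi, hs⟩ := hpacked
    obtain ⟨r, hr⟩ := Option.ne_none_iff_exists'.mp hs
    have hmove : Move (SimpleGraph.cycleGraph (n + 1)) a (a ∘ Equiv.swap i.succ i.castSucc) :=
      ⟨(r, i.succ, i.castSucc), ⟨(SimpleGraph.cycleGraph_adj_castSucc_succ i).symm, hr, hi⟩,
        applyStep_eq_comp_swap hr hi⟩
    have hord : ordering (a ∘ Equiv.swap i.succ i.castSucc) = ordering a := by
      rw [Equiv.swap_comm]
      exact ordering_comp_swap_castSucc_succ a i (Or.inl hi)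
    have hlt := occupiedIndexSum_comp_swap_lt Fin.castSucc_lt_succ hs hi
    exact .head hmove (hord ▸ ih _ (h ▸ hlt) _ rfl)

theorem reflTransGen_packed_rotate_one (L : List R) (hL : L.length < n) :
    ReflTransGen (Move (SimpleGraph.cycleGraph n)) (packed L) (packed (L.rotate 1)) := by
  cases L with
  | nil => exact .refl
  | cons r M =>
    obtain ⟨m, rfl⟩ : ∃ m, n = m + 2 := ⟨n - 2, by simp at hL; omega⟩
    have hlast : packed (r :: M) (Fin.last (m + 1)) = none :=
      List.getElem?_eq_none (by simp at hL ⊢; omega)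
    have hmove : Move _ (packed (r :: M)) (packed (r :: M) ∘ Equiv.swap 0 (Fin.last _)) :=
      ⟨(r, 0, Fin.last _), ⟨SimpleGraph.cycleGraph_adj_zero_last, rfl, hlast⟩, applyStep_eq_comp_swap rfl hlast⟩
    have hord :
        ordering (packed (r :: M) ∘ Equiv.swap 0 (Fin.last (m + 1))) = (r :: M).rotate 1 := by
      have hmid : (fun i : Fin m => packed (r :: M) i.castSucc.succ) = packed M := rfl
      rw [ordering_comp_swap_zero_last, hlast, hmid, ordering_packed M (by simp at hL; omega)]
      simp [packed]
    exact .head hmove (hord ▸ reflTransGen_packed_ordering _)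

theorem reflTransGen_packed_rotate (L : List R) (hL : L.length < n) (k : ℕ) :
    ReflTransGen (Move (SimpleGraph.cycleGraph n)) (packed L) (packed (L.rotate k)) := by
  induction k with
  | zero => simp only [List.rotate_zero]; exact .refl
  | succ k ih =>
    rw [← List.rotate_rotate]
    exact ih.trans (reflTransGen_packed_rotate_one _ (by rwa [List.length_rotate]))

theorem reflTransGen_of_isRotated {a b : Arrangement (Fin n) R} (hlen : (ordering a).length < n)
    (h : ordering a ~r ordering b) : ReflTransGen (Move (SimpleGraph.cycleGraph n)) a b := by
  obtain ⟨m, rfl⟩ : ∃ m, n = m + 1 := ⟨n - 1, by omega⟩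
  obtain ⟨k, hk⟩ := h
  have hb := reflTransGen_move_symm (reflTransGen_packed_ordering b)
  exact (reflTransGen_packed_ordering a).trans
    ((reflTransGen_packed_rotate _ hlen k).trans (hk ▸ hb))

end Ring

theorem ring_reachable_iff_rotation_general {R : Type} {n k : ℕ}
    (a b : Arrangement (Fin n) R)
    (hk : (ordering a).length = k) (hkn : k < n) :
    ((∃ P : List (R × Fin n × Fin n), IsPlan (SimpleGraph.cycleGraph n) P a b) ∧
     (∃ Q : List (R × Fin n × Fin n), IsPlan (SimpleGraph.cycleGraph n) Q b a)) ↔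
      ∃ m : ℕ, ordering b = (ordering a).rotate m := by
  simp only [exists_isPlan_iff_reflTransGen]
  constructor
  · rintro ⟨hab, -⟩
    obtain ⟨m, hm⟩ := ordering_isRotated_of_reflTransGen hab
    exact ⟨m, hm.symm⟩
  · rintro ⟨m, hm⟩
    have hab := reflTransGen_of_isRotated (hk ▸ hkn) ⟨m, hm.symm⟩
    exact ⟨hab, reflTransGen_move_symm hab⟩

/-- In a cycle graph (ring) on `n ≥ 3` vertices occupied by `1 ≤ k < n` robots, two
arrangements of the same robot set are mutually reachable iff their cyclic
orderings of robots around the ring agree up to rotation. -/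
theorem ring_reachable_iff_rotation {R : Type} {n k : ℕ} (hn : 3 ≤ n)
    (a b : Arrangement (Fin n) R) (ha : ArrInj a) (hb : ArrInj b)
    (hrange : {r : R | ∃ v, a v = some r} = {r : R | ∃ v, b v = some r})
    (hk : (ordering a).length = k) (hk1 : 1 ≤ k) (hkn : k < n) :
    ((∃ P : List (R × Fin n × Fin n), IsPlan (SimpleGraph.cycleGraph n) P a b) ∧
     (∃ Q : List (R × Fin n × Fin n), IsPlan (SimpleGraph.cycleGraph n) Q b a)) ↔
      ∃ m : ℕ, ordering b = (ordering a).rotate m :=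
  ring_reachable_iff_rotation_general a b hk hkn
end
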